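/- arXiv:2104.14144 — 3 statements merged into one kernel-verified Lean document; each statement's English description precedes it below -/
import Mathlib

section
/- Let S be a finite set with |S| = N ≥ 1, f : S → S, and h : S → Y. If h(f^j(x)) = h(f^j(x')) for all j with 0 ≤ j ≤ N − 2, then h(f^j(x)) = h(f^j(x')) for all j ∈ ℕ. That is, indistinguishability over the first N − 1 output values implies indistinguishability forever, improving the bound of N output values. -/
/-- On a finite state set of cardinality `N ≥ 1`, agreement of the first `N - 1`
output values (i.e. for all `0 ≤ j ≤ N - 2`) already implies agreement of all
output values. -/
theorem indist_window_card_sub_one {S Y : Type*} [Fintype S] (f : S → S) (h : S → Y)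
    (N : ℕ) (hN : Fintype.card S = N) (hN1 : 1 ≤ N) :
    ∀ x x' : S,
      (∀ j, 0 ≤ j → j ≤ N - 2 → h (f^[j] x) = h (f^[j] x')) →
        ∀ j : ℕ, h (f^[j] x) = h (f^[j] x') := by
  classical
  set E : ℕ → S → S → Prop := fun k a b => ∀ j ≤ k, h (f^[j] a) = h (f^[j] b) with hE
  -- shift characterization of `E (k+1)`
  have hsucc : ∀ k a b, E (k + 1) a b ↔ h a = h b ∧ E k (f a) (f b) := by
    intro k a b
    constructor
    · intro H
      refine ⟨H 0 (Nat.zero_le _), fun j hj => ?_⟩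
      have := H (j + 1) (Nat.succ_le_succ hj)
      simpa [Function.iterate_succ_apply] using this
    · rintro ⟨H0, H1⟩ j hj
      cases j with
      | zero => simpa using H0
      | succ i =>
        have := H1 i (Nat.lt_succ_iff.mp hj)
        simpa [Function.iterate_succ_apply] using this
  -- monotonicity of E in k
  have hmono : ∀ k a b, E (k + 1) a b → E k a b := fun k a b H j hj =>
    H j (hj.trans (Nat.le_succ _))
  -- once the chain stabilizes at k, it stabilizes forever
  have hstab : ∀ k, (∀ a b, E k a b → E (k + 1) a b) →
      ∀ m, k ≤ m → ∀ a b, E m a b → E (m + 1) a b := by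
    intro k hk m hm
    induction m, hm using Nat.le_induction with
    | base => exact hk
    | succ m hm ih =>
      intro a b H
      rw [hsucc] at H ⊢
      exact ⟨H.1, ih _ _ H.2⟩
  have hall : ∀ k, (∀ a b, E k a b → E (k + 1) a b) →
      ∀ a b, E k a b → ∀ m, k ≤ m → E m a b := by
    intro k hk a b H m hm
    induction m, hm using Nat.le_induction with
    | base => exact H
    | succ m hm ih => exact hstab k hk m hm a b ih
  -- the fingerprint functions
  set φ : (k : ℕ) → S → (Fin (k + 1) → Y) := fun k a j => h (f^[(j : ℕ)] a) with hφ
  have hφE : ∀ k a b, φ k a = φ k b ↔ E k a b := by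
    intro k a b
    constructor
    · intro H j hj
      have := congrFun H ⟨j, Nat.lt_succ_of_le hj⟩
      simpa [hφ] using this
    · intro H
      funext j
      exact H j (Nat.lt_succ_iff.mp j.isLt)
  set c : ℕ → ℕ := fun k => Nat.card (Set.range (φ k)) with hc
  -- the restriction map between ranges
  have hr : ∀ k, ∃ r : Set.range (φ (k + 1)) → Set.range (φ k),
      Function.Surjective r ∧ ∀ a, r ⟨φ (k + 1) a, ⟨a, rfl⟩⟩ = ⟨φ k a, ⟨a, rfl⟩⟩ := by
    intro k
    refine ⟨fun g => ⟨fun j => g.1 j.castSucc, ?_⟩, ?_, ?_⟩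
    · obtain ⟨a, ha⟩ := g.2
      exact ⟨a, by funext j; rw [← ha]; simp [hφ]⟩
    · rintro ⟨g, a, rfl⟩
      exact ⟨⟨φ (k + 1) a, ⟨a, rfl⟩⟩, by apply Subtype.ext; funext j; simp [hφ]⟩
    · intro a
      apply Subtype.ext; funext j; simp [hφ]
  -- cardinalities are bounded by N
  have hcN : ∀ k, c k ≤ N := by
    intro k
    have h1 := Finite.card_range_le (φ k)
    have h2 : Nat.card S = N := by rw [Nat.card_eq_fintype_card, hN]
    exact h2 ▸ h1
  -- strict growth while the chain does not stabilize
  have hstrict : ∀ k, (∃ a b, E k a b ∧ ¬ E (k + 1) a b) → c k < c (k + 1) := by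
    intro k ⟨a, b, hab, hab'⟩
    obtain ⟨r, hrsurj, hrval⟩ := hr k
    haveI : Fintype (Set.range (φ (k + 1))) := Fintype.ofFinite _
    haveI : Fintype (Set.range (φ k)) := Fintype.ofFinite _
    have hnotinj : ¬ Function.Injective r := by
      intro hinj
      apply hab'
      rw [← hφE]
      have h1 : r ⟨φ (k + 1) a, ⟨a, rfl⟩⟩ = r ⟨φ (k + 1) b, ⟨b, rfl⟩⟩ := by
        rw [hrval, hrval]
        exact Subtype.ext ((hφE k a b).mpr hab)
      have := hinj h1
      exact congrArg Subtype.val this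
    have hlt := Fintype.card_lt_of_surjective_not_injective r hrsurj hnotinj
    simp only [hc]
    rw [Nat.card_eq_fintype_card, Nat.card_eq_fintype_card]
    exact hlt
  -- main argument
  intro x x' Hyp
  -- trivial case: N = 1
  rcases Nat.lt_or_ge N 2 with hN2 | hN2
  · interval_cases N
    have : Fintype.card S ≤ 1 := by omega
    haveI : Subsingleton S := Fintype.card_le_one_iff_subsingleton.mp this
    intro j; rw [Subsingleton.elim x x']
  -- trivial case: h constant
  by_cases hconst : ∀ a b : S, h a = h b
  · intro j; exact hconst _ _
  push_neg at hconst
  obtain ⟨a0, b0, hab0⟩ := hconst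
  -- c 0 ≥ 2
  have hc0 : 2 ≤ c 0 := by
    haveI : Fintype (Set.range (φ 0)) := Fintype.ofFinite _
    have : (⟨φ 0 a0, ⟨a0, rfl⟩⟩ : Set.range (φ 0)) ≠ ⟨φ 0 b0, ⟨b0, rfl⟩⟩ := by
      intro hcon
      apply hab0
      have := congrArg Subtype.val hcon
      have := (hφE 0 a0 b0).mp this 0 le_rfl
      simpa using this
    have hlt := Fintype.one_lt_card_iff.mpr ⟨_, _, this⟩
    simp only [hc]
    rw [Nat.card_eq_fintype_card]
    exact hlt
  -- there is a stabilization index k ≤ N - 2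
  have hexists : ∃ k ≤ N - 2, ∀ a b, E k a b → E (k + 1) a b := by
    by_contra hcon
    push_neg at hcon
    have hgrow : ∀ k ≤ N - 2, c k < c (k + 1) := by
      intro k hk
      apply hstrict
      obtain ⟨a, b, hab, hab'⟩ := hcon k hk
      exact ⟨a, b, hab, hab'⟩
    have key : ∀ k ≤ N - 1, c 0 + k ≤ c k := by
      intro k hk
      induction k with
      | zero => simp
      | succ k ih =>
        have h1 : k ≤ N - 2 := by omega
        have h2 := ih (by omega)
        have := hgrow k h1
        omega
    have := key (N - 1) le_rfl
    have := hcN (N - 1)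
    omega
  obtain ⟨k, hk, hkstab⟩ := hexists
  -- x and x' are E (N-2)-equivalent, hence E k-equivalent
  have hEk : E k x x' := fun j hj => Hyp j (Nat.zero_le _) (hj.trans hk)
  intro j
  have := hall k hkstab x x' hEk (max j k) (le_max_right _ _)
  exact this j (le_max_left _ _)
end

section
/- Consider a Boolean control network (F_u)_{u∈U}, h : S → Y with S, U, Y finite. Suppose it is output-feedback observable (O5): there exists a sequence of feedback maps g_t : Y → U such that for any two distinct initial states x ≠ x', the closed-loop output sequences under u(t) = g_t(y(t)) are distinct. Then the network is O2-observable: for every initial state x there exists an open-loop input sequence (namely, the input sequence generated by the feedback along the trajectory of x) such that for every x' ≠ x the output sequences of x and x' under this input sequence are distinct. -/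
/-- Open-loop state trajectory. -/
def traj {S U : Type*} (F : U → S → S) (x : S) (u : ℕ → U) : ℕ → S
  | 0 => x
  | k + 1 => F (u k) (traj F x u k)

/-- Closed-loop state trajectory under output feedback `u(t) = g_t(y(t))`. -/
def clTraj {S U Y : Type*} (F : U → S → S) (h : S → Y) (g : ℕ → Y → U) (x : S) : ℕ → S
  | 0 => x
  | t + 1 => F (g t (h (clTraj F h g x t))) (clTraj F h g x t)

/-- Output-feedback observability (O5) implies O2-observability. -/
theorem feedback_observable_implies_O2 {S U Y : Type*} [Finite S] [Finite U] [Finite Y]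
    (F : U → S → S) (h : S → Y)
    (hO5 : ∃ g : ℕ → Y → U, ∀ x x' : S, x ≠ x' →
      (fun t : ℕ => h (clTraj F h g x t)) ≠ fun t : ℕ => h (clTraj F h g x' t)) :
    ∀ x : S, ∃ u : ℕ → U, ∀ x' : S, x' ≠ x →
      (fun k : ℕ => h (traj F x u k)) ≠ fun k : ℕ => h (traj F x' u k) := by
  obtain ⟨g, hg⟩ := hO5
  intro x
  refine ⟨fun t => g t (h (clTraj F h g x t)), ?_⟩
  have hx : ∀ t, traj F x (fun t => g t (h (clTraj F h g x t))) t = clTraj F h g x t := by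
    intro t
    induction t with
    | zero => rfl
    | succ n ih => simp [traj, clTraj, ih]
  intro x' hne heq
  have hx' : ∀ t, traj F x' (fun t => g t (h (clTraj F h g x t))) t = clTraj F h g x' t := by
    intro t
    induction t with
    | zero => rfl
    | succ n ih =>
      have h1 : h (clTraj F h g x n) = h (clTraj F h g x' n) := by
        have := congrFun heq n
        simpa [hx n, ih] using this
      simp [traj, clTraj, ih, h1]
  apply hg x x' hne.symm
  funext t
  have := congrFun heq t
  simpa [hx t, hx' t] using this
end

section
/- Let (F_u)_{u∈U}, h : S → Y be a Boolean control network with S, U finite and nonempty. Define: the system is controllable if for every initial state x_0 and every destination state x_d there exist T ∈ ℕ and inputs u_0, …, u_T ∈ U with F_{u_T} ∘ ⋯ ∘ F_{u_0}(x_0) = x_d. If the system is controllable, then for every x_0 ∈ S there exists a single finite input sequence u_0, …, u_{T} and resulting state trajectory x_0, x_1, …, x_{T+1} (with x_{k+1} = F_{u_k}(x_k)) such that the set of input-state pairs {(u_k, x_k) : 0 ≤ k ≤ T} equals U × S. -/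
lemma traj_add {S U : Type*} (F : U → S → S) (x : S) (u : ℕ → U) (n m : ℕ) :
    traj F x u (n + m) = traj F (traj F x u n) (fun i => u (n + i)) m := by
  induction m with
  | zero => rfl
  | succ m ih => simp [traj, ih]

lemma traj_congr {S U : Type*} (F : U → S → S) (x : S) (u v : ℕ → U) (k : ℕ)
    (h : ∀ i < k, u i = v i) : traj F x u k = traj F x v k := by
  induction k with
  | zero => rfl
  | succ k ih =>
      simp only [traj, h k (Nat.lt_succ_self k),
        ih (fun i hi => h i (hi.trans (Nat.lt_succ_self k)))]

lemma cover {S U : Type*} (F : U → S → S)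
    (hctrl : ∀ x0 xd : S, ∃ (T : ℕ) (u : ℕ → U), traj F x0 u (T + 1) = xd) :
    ∀ (L : List (U × S)) (x0 : S), ∃ (T : ℕ) (u : ℕ → U),
      ∀ p ∈ L, ∃ k ≤ T, p = (u k, traj F x0 u k) := by
  intro L
  induction L with
  | nil =>
      intro x0
      obtain ⟨T, u, _⟩ := hctrl x0 x0
      exact ⟨T, u, by simp⟩
  | cons p L ih =>
      intro x0
      obtain ⟨u', x'⟩ := p
      obtain ⟨T0, u0, h0⟩ := hctrl x0 x'
      set n := T0 + 1 with hn
      obtain ⟨T1, u1, h1⟩ := ih (F u' x')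
      refine ⟨n + 1 + T1, fun k => if k < n then u0 k else if k = n then u' else u1 (k - (n + 1)), ?_⟩
      set u : ℕ → U := fun k => if k < n then u0 k else if k = n then u' else u1 (k - (n + 1)) with hu
      have hxn : traj F x0 u n = x' := by
        rw [traj_congr F x0 u u0 n (fun i hi => by simp [hu, hi])]
        exact h0
      have hun : u n = u' := by simp [hu]
      have hshift : ∀ i, u (n + 1 + i) = u1 i := by
        intro i
        have h1 : ¬ (n + 1 + i < n) := by omega
        have h2 : ¬ (n + 1 + i = n) := by omega
        simp [hu, h1, h2]
      have hnext : traj F x0 u (n + 1) = F u' x' := by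
        show F (u n) (traj F x0 u n) = F u' x'
        rw [hxn, hun]
      have htraj : ∀ k, traj F x0 u (n + 1 + k) = traj F (F u' x') u1 k := by
        intro k
        rw [traj_add F x0 u (n + 1) k, hnext]
        exact traj_congr _ _ _ _ _ (fun i _ => hshift i)
      intro q hq
      rcases List.mem_cons.mp hq with hq | hq
      · exact ⟨n, by omega, by rw [hq, hun, hxn]⟩
      · obtain ⟨k, hk, hpk⟩ := h1 q hq
        refine ⟨n + 1 + k, by omega, ?_⟩
        rw [htraj k, hshift k]
        exact hpk

/-- If a Boolean control network is controllable, then from any initial state a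
single finite input sequence produces a trajectory whose input-state pairs
traverse all of `U × S`. -/
theorem controllable_traverse {S U Y : Type*} [Fintype S] [Fintype U]
    [Nonempty S] [Nonempty U] (F : U → S → S) (h : S → Y)
    (hctrl : ∀ x0 xd : S, ∃ (T : ℕ) (u : ℕ → U), traj F x0 u (T + 1) = xd) :
    ∀ x0 : S, ∃ (T : ℕ) (u : ℕ → U),
      {p : U × S | ∃ k ≤ T, p = (u k, traj F x0 u k)} = Set.univ := by
  intro x0
  obtain ⟨T, u, hcov⟩ := cover F hctrl (Finset.univ : Finset (U × S)).toList x0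
  refine ⟨T, u, ?_⟩
  ext p
  simp only [Set.mem_setOf_eq, Set.mem_univ, iff_true]
  exact hcov p (by simp)
end
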